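/- arXiv:2310.10783 — 6 statements merged into one kernel-verified Lean document; each statement's English description precedes it below -/
import Mathlib

section
/- Let C₁, C₂, D₃, TOL, C_α > 0, set D₁ = 2C₁, D₂ = 2C₂, and let N, M₁, M₂ > 0, 0 < κ < 1, λ, μ ∈ ℝ satisfy the six stationarity equations: (i) M₁ + M₂ + (μ/N²)(D₃ + D₁/M₁ + D₂/M₂) = 0; (ii) N + λC₁/M₁² + μD₁/(N·M₁²) = 0; (iii) N + λC₂/M₂² + μD₂/(N·M₂²) = 0; (iv) 2μκ·TOL²/C_α² − λ·TOL = 0; (v) (1 − κ)TOL − C₁/M₁ − C₂/M₂ = 0; (vi) (κ·TOL/C_α)² − (D₃ + D₁/M₁ + D₂/M₂)/N = 0. Then κ satisfies D₃·κ = 2D₃·(1 − κ) + 4(1 − κ)²·TOL; equivalently, (4·TOL/D₃)κ² − (3 + 8·TOL/D₃)κ + 2 + 4·TOL/D₃ = 0. -/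
/-- The six stationarity conditions of the Lagrangian imply the quadratic
equation for the optimal error-splitting parameter `κ`. -/
theorem kappa_quadratic_from_stationarity
    (C₁ C₂ D₁ D₂ D₃ TOL Cα N M₁ M₂ κ lam μ : ℝ)
    (hC₁ : 0 < C₁) (hC₂ : 0 < C₂) (hD₃ : 0 < D₃) (hTOL : 0 < TOL) (hCα : 0 < Cα)
    (hD₁ : D₁ = 2 * C₁) (hD₂ : D₂ = 2 * C₂)
    (hN : 0 < N) (hM₁ : 0 < M₁) (hM₂ : 0 < M₂) (hκ0 : 0 < κ) (hκ1 : κ < 1)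
    (h1 : M₁ + M₂ + (μ / N ^ 2) * (D₃ + D₁ / M₁ + D₂ / M₂) = 0)
    (h2 : N + lam * C₁ / M₁ ^ 2 + μ * D₁ / (N * M₁ ^ 2) = 0)
    (h3 : N + lam * C₂ / M₂ ^ 2 + μ * D₂ / (N * M₂ ^ 2) = 0)
    (h4 : 2 * μ * κ * TOL ^ 2 / Cα ^ 2 - lam * TOL = 0)
    (h5 : (1 - κ) * TOL - C₁ / M₁ - C₂ / M₂ = 0)
    (h6 : (κ * TOL / Cα) ^ 2 - (D₃ + D₁ / M₁ + D₂ / M₂) / N = 0) :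
    D₃ * κ = 2 * D₃ * (1 - κ) + 4 * (1 - κ) ^ 2 * TOL ∧
      (4 * TOL / D₃) * κ ^ 2 - (3 + 8 * TOL / D₃) * κ + 2 + 4 * TOL / D₃ = 0 := by
  have hNne : N ≠ 0 := hN.ne'
  have hM₁ne : M₁ ≠ 0 := hM₁.ne'
  have hM₂ne : M₂ ≠ 0 := hM₂.ne'
  have hCαne : Cα ≠ 0 := hCα.ne'
  have hMM : M₁ * M₂ ≠ 0 := mul_ne_zero hM₁ne hM₂ne
  subst hD₁ hD₂
  field_simp at h1 h2 h3 h4 h5 h6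
  -- h1 : (M₁ + M₂) * (N ^ 2 * (M₁ * M₂)) + μ * ((D₃ * M₁ + 2 * C₁) * M₂ + 2 * C₂ * M₁) = 0
  -- h2 : (N * M₁ ^ 2 + lam * C₁) * (N * M₁ ^ 2) + μ * (2 * C₁) * M₁ ^ 2 = 0
  -- h3 : (N * M₂ ^ 2 + lam * C₂) * (N * M₂ ^ 2) + μ * (2 * C₂) * M₂ ^ 2 = 0
  -- h4 : 2 * μ * κ * TOL ^ 2 - Cα ^ 2 * (lam * TOL) = 0
  -- h5 : ((1 - κ) * TOL * M₁ - C₁) * M₂ - M₁ * C₂ = 0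
  -- h6 : (κ * TOL) ^ 2 * (M₁ * M₂ * N) - Cα ^ 2 * ((D₃ * M₁ + 2 * C₁) * M₂ + 2 * C₂ * M₁) = 0
  have hμ : μ ≠ 0 := by
    intro h
    rw [h] at h1
    nlinarith [mul_pos hM₁ hM₂, mul_pos (mul_pos hN hN) (mul_pos hM₁ hM₂),
      add_pos hM₁ hM₂]
  -- divide h2 by M₁^2, h3 by M₂^2
  have e2 : C₁ * (lam * N + 2 * μ) = -(N ^ 2 * M₁ ^ 2) := by
    apply mul_left_cancel₀ (pow_ne_zero 2 hM₁ne)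
    linear_combination M₁ ^ 2 * h2
  have e3 : C₂ * (lam * N + 2 * μ) = -(N ^ 2 * M₂ ^ 2) := by
    apply mul_left_cancel₀ (pow_ne_zero 2 hM₂ne)
    linear_combination M₂ ^ 2 * h3
  -- S' = M₁M₂ * (D₃ + 2(1-κ)TOL)
  have hS : (D₃ * M₁ + 2 * C₁) * M₂ + 2 * C₂ * M₁
      = M₁ * M₂ * (D₃ + 2 * (1 - κ) * TOL) := by
    linear_combination (-2 : ℝ) * h5
  have h1b : N ^ 2 * (M₁ + M₂) + μ * (D₃ + 2 * (1 - κ) * TOL) = 0 := by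
    apply mul_left_cancel₀ hMM
    linear_combination h1 - μ * hS
  have h6b : (κ * TOL) ^ 2 * N = Cα ^ 2 * (D₃ + 2 * (1 - κ) * TOL) := by
    apply mul_left_cancel₀ hMM
    linear_combination h6 + Cα ^ 2 * hS
  have key0 : (1 - κ) * TOL * (lam * N + 2 * μ) + N ^ 2 * (M₁ + M₂) = 0 := by
    apply mul_left_cancel₀ hMM
    linear_combination (lam * N + 2 * μ) * h5 + M₂ * e2 + M₁ * e3
  have keyA : (1 - κ) * TOL * (lam * N + 2 * μ) = μ * (D₃ + 2 * (1 - κ) * TOL) := by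
    linear_combination key0 - h1b
  have h4b : Cα ^ 2 * lam = 2 * μ * κ * TOL := by
    apply mul_right_cancel₀ hTOL.ne'
    linear_combination -h4
  have keyB : (1 - κ) * TOL * 2 * (κ * TOL * N + Cα ^ 2)
      = (D₃ + 2 * (1 - κ) * TOL) * Cα ^ 2 := by
    apply mul_left_cancel₀ hμ
    linear_combination Cα ^ 2 * keyA - (1 - κ) * TOL * N * h4b
  have g1 : D₃ * κ = 2 * D₃ * (1 - κ) + 4 * (1 - κ) ^ 2 * TOL := by
    apply mul_right_cancel₀ (mul_ne_zero hTOL.ne' (pow_ne_zero 2 hCαne))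
    linear_combination (-(κ * TOL)) * keyB + 2 * (1 - κ) * TOL * h6b
  refine ⟨g1, ?_⟩
  field_simp
  linear_combination -g1
end

section
/- Let C₁, C₂, C₃, D₃, TOL, C_α, γ, η > 0, set D₁ = 2C₁ and D₂ = 2C₂, and let N, M₁, M₂, h > 0, 0 < κ < 1, λ, μ ∈ ℝ satisfy the seven stationarity equations: (i) (M₁ + M₂)h^(−γ) + λD₃/N² + λD₁/(N²M₁) + λD₂/(N²M₂) = 0; (ii) N·h^(−γ) + λD₁/(N·M₁²) + μC₁/M₁² = 0; (iii) N·h^(−γ) + λD₂/(N·M₂²) + μC₂/M₂² = 0; (iv) −γN·h^(−γ−1)(M₁ + M₂) − μC₃η·h^(η−1) = 0; (v) 2λκ(TOL/C_α)² − μ·TOL = 0; (vi) (κ·TOL/C_α)² − D₃/N − D₁/(N·M₁) − D₂/(N·M₂) = 0; (vii) (1 − κ)TOL − C₃h^η − C₁/M₁ − C₂/M₂ = 0. Then N = (C_α²/(κ²·TOL))·(D₃/TOL + 2(1 − κ(1 + γ/(2η)))). -/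
set_option maxHeartbeats 1000000 in
/-- The seven stationarity conditions of the Lagrangian with discretization bias determine the optimal number of outer samples `N`. -/
theorem optimal_N_with_bias
    (C₁ C₂ C₃ D₁ D₂ D₃ TOL Cα γ η N M₁ M₂ h κ lam μ : ℝ)
    (hC₁ : 0 < C₁) (hC₂ : 0 < C₂) (hC₃ : 0 < C₃) (hD₃ : 0 < D₃)
    (hTOL : 0 < TOL) (hCα : 0 < Cα) (hγ : 0 < γ) (hη : 0 < η)
    (hD₁ : D₁ = 2 * C₁) (hD₂ : D₂ = 2 * C₂)
    (hN : 0 < N) (hM₁ : 0 < M₁) (hM₂ : 0 < M₂) (hh : 0 < h)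
    (hκ0 : 0 < κ) (hκ1 : κ < 1)
    (h1 : (M₁ + M₂) * h ^ (-γ) + lam * D₃ / N ^ 2 + lam * D₁ / (N ^ 2 * M₁)
        + lam * D₂ / (N ^ 2 * M₂) = 0)
    (h2 : N * h ^ (-γ) + lam * D₁ / (N * M₁ ^ 2) + μ * C₁ / M₁ ^ 2 = 0)
    (h3 : N * h ^ (-γ) + lam * D₂ / (N * M₂ ^ 2) + μ * C₂ / M₂ ^ 2 = 0)
    (h4 : -γ * N * h ^ (-γ - 1) * (M₁ + M₂) - μ * C₃ * η * h ^ (η - 1) = 0)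
    (h5 : 2 * lam * κ * (TOL / Cα) ^ 2 - μ * TOL = 0)
    (h6 : (κ * TOL / Cα) ^ 2 - D₃ / N - D₁ / (N * M₁) - D₂ / (N * M₂) = 0)
    (h7 : (1 - κ) * TOL - C₃ * h ^ η - C₁ / M₁ - C₂ / M₂ = 0) :
    N = Cα ^ 2 / (κ ^ 2 * TOL) * (D₃ / TOL + 2 * (1 - κ * (1 + γ / (2 * η)))) := by
  have hN0 : N ≠ 0 := hN.ne'
  have hM10 : M₁ ≠ 0 := hM₁.ne'
  have hM20 : M₂ ≠ 0 := hM₂.ne'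
  have hT0 : TOL ≠ 0 := hTOL.ne'
  have hCα0 : Cα ≠ 0 := hCα.ne'
  have hκ0' : κ ≠ 0 := hκ0.ne'
  have hη0 : η ≠ 0 := hη.ne'
  have hh0 : h ≠ 0 := hh.ne'
  have cancel : ∀ {x f : ℝ}, f ≠ 0 → x * f = 0 → x = 0 :=
    fun hf hx => (mul_eq_zero.mp hx).resolve_right hf
  have hP : 0 < h ^ (-γ) := Real.rpow_pos_of_pos hh _
  have hQ : 0 < h ^ η := Real.rpow_pos_of_pos hh _
  set P := h ^ (-γ) with hPdef
  set Q := h ^ η with hQdef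
  have hg1 : h ^ (-γ - 1) = P / h := by rw [hPdef, Real.rpow_sub hh, Real.rpow_one]
  have hη1 : h ^ (η - 1) = Q / h := by rw [hQdef, Real.rpow_sub hh, Real.rpow_one]
  rw [hg1, hη1] at h4
  field_simp at h1 h2 h3 h4 h5 h6 h7
  -- SA : lam * κ²TOL² + Cα²(M₁+M₂)PN = 0
  have SA : lam * κ ^ 2 * TOL ^ 2 + Cα ^ 2 * (M₁ + M₂) * P * N = 0 := by
    refine cancel (f := N ^ 5 * M₁ * M₂) (by positivity) ?_
    linear_combination N ^ 4 * lam * h6 + N ^ 4 * Cα ^ 2 * h1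
  -- lam ≠ 0
  have hMM : 0 < M₁ + M₂ := by linarith
  have hlam : lam ≠ 0 := by
    intro h0
    rw [h0] at SA
    nlinarith [mul_pos (mul_pos (mul_pos (pow_pos hCα 2) hMM) hP) hN]
  -- SB : μCα² - 2lam κ TOL = 0
  have SB : μ * Cα ^ 2 - 2 * lam * κ * TOL = 0 := by
    refine cancel (f := TOL) hT0 ?_
    linear_combination -h5
  -- SC : 2η C₃ Q = γ κ TOL
  have SC : C₃ * Q * (2 * η) - γ * κ * TOL = 0 := by
    refine cancel (f := lam * κ * TOL * h) (by simp [hlam, hκ0', hT0, hh0]) ?_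
    linear_combination (-Cα ^ 2 * h) * h4 - (h * C₃ * η * Q) * SB - (γ * h) * SA
  -- F1, F2
  have F1 : C₁ * (2 * lam + μ * N) + N ^ 2 * P * M₁ ^ 2 = 0 := by
    refine cancel (f := M₁ ^ 2) (by positivity) ?_
    linear_combination M₁ ^ 2 * h2 - lam * M₁ ^ 2 * hD₁
  have F2 : C₂ * (2 * lam + μ * N) + N ^ 2 * P * M₂ ^ 2 = 0 := by
    refine cancel (f := M₂ ^ 2) (by positivity) ?_
    linear_combination M₂ ^ 2 * h3 - lam * M₂ ^ 2 * hD₂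
  -- SD
  have SD : (2 * η * (1 - κ) * TOL - γ * κ * TOL) * (2 * lam + μ * N)
      + 2 * η * N ^ 2 * P * (M₁ + M₂) = 0 := by
    refine cancel (f := M₁ * M₂) (by positivity) ?_
    linear_combination (2 * η * (2 * lam + μ * N)) * h7
      + ((2 * lam + μ * N) * M₁ * M₂) * SC + (2 * η * M₂) * F1 + (2 * η * M₁) * F2
  -- SE0
  have SE0 : κ ^ 2 * TOL ^ 2 * N * (2 * lam + μ * N) - Cα ^ 2 * D₃ * (2 * lam + μ * N)
      + 2 * Cα ^ 2 * N ^ 2 * P * (M₁ + M₂) = 0 := by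
    refine cancel (f := N ^ 2 * M₁ * M₂) (by positivity) ?_
    linear_combination (2 * lam + μ * N) * N ^ 2 * h6
      + (2 * Cα ^ 2 * M₂ * N ^ 2) * F1 + (2 * Cα ^ 2 * M₁ * N ^ 2) * F2
      + (Cα ^ 2 * (2 * lam + μ * N) * M₂ * N ^ 2) * hD₁
      + (Cα ^ 2 * (2 * lam + μ * N) * M₁ * N ^ 2) * hD₂
  -- SE'
  have SE' : κ ^ 2 * TOL ^ 2 * N ^ 2 * μ - Cα ^ 2 * D₃ * (2 * lam + μ * N) = 0 := by
    linear_combination SE0 - 2 * N * SA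
  -- I
  have I1 : (2 * η * (1 - κ) - γ * κ) * (Cα ^ 2 + κ * TOL * N) - η * κ ^ 2 * TOL * N = 0 := by
    refine cancel (f := 2 * lam * TOL) (by simp [hlam, hT0]) ?_
    linear_combination Cα ^ 2 * SD - 2 * η * N * SA
      - ((2 * η * (1 - κ) * TOL - γ * κ * TOL) * N) * SB
  -- II
  have I2 : κ ^ 3 * TOL ^ 3 * N ^ 2 - Cα ^ 2 * D₃ * (Cα ^ 2 + κ * TOL * N) = 0 := by
    refine cancel (f := 2 * lam) (by simp [hlam]) ?_
    linear_combination Cα ^ 2 * SE' - κ ^ 2 * TOL ^ 2 * N ^ 2 * SB + Cα ^ 2 * D₃ * N * SB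
  -- III
  have I3 : (2 * η * (1 - κ) - γ * κ) * κ * TOL ^ 2 * N - Cα ^ 2 * D₃ * η = 0 := by
    refine cancel (f := κ ^ 2 * TOL * N) (by positivity) ?_
    linear_combination (2 * η * (1 - κ) - γ * κ) * I2 + Cα ^ 2 * D₃ * I1
  -- final
  have T : N * κ ^ 2 * TOL ^ 2 * η - Cα ^ 2 * D₃ * η
      - Cα ^ 2 * (2 * η * (1 - κ) - γ * κ) * TOL = 0 := by
    linear_combination I3 - TOL * I1
  field_simp
  linear_combination T
end

section
/- Let C₁, C₂, C₃, D₃, TOL, C_α, γ, η > 0, set D₁ = 2C₁ and D₂ = 2C₂, and let N, M₁, M₂, h > 0, 0 < κ < 1, λ, μ ∈ ℝ satisfy the seven stationarity equations: (i) (M₁ + M₂)h^(−γ) + λD₃/N² + λD₁/(N²M₁) + λD₂/(N²M₂) = 0; (ii) N·h^(−γ) + λD₁/(N·M₁²) + μC₁/M₁² = 0; (iii) N·h^(−γ) + λD₂/(N·M₂²) + μC₂/M₂² = 0; (iv) −γN·h^(−γ−1)(M₁ + M₂) − μC₃η·h^(η−1) = 0; (v) 2λκ(TOL/C_α)² − μ·TOL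 = 0; (vi) (κ·TOL/C_α)² − D₃/N − D₁/(N·M₁) − D₂/(N·M₂) = 0; (vii) (1 − κ)TOL − C₃h^η − C₁/M₁ − C₂/M₂ = 0. Then h^η = γκ·TOL/(2η·C₃); equivalently h = (γκ·TOL/(2η·C₃))^(1/η). -/
/-- The seven stationarity conditions of the Lagrangian with discretization bias determine the optimal discretization parameter `h`. -/
theorem optimal_h_from_stationarity
    (C₁ C₂ C₃ D₁ D₂ D₃ TOL Cα γ η N M₁ M₂ h κ lam μ : ℝ)
    (hC₁ : 0 < C₁) (hC₂ : 0 < C₂) (hC₃ : 0 < C₃) (hD₃ : 0 < D₃)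
    (hTOL : 0 < TOL) (hCα : 0 < Cα) (hγ : 0 < γ) (hη : 0 < η)
    (hD₁ : D₁ = 2 * C₁) (hD₂ : D₂ = 2 * C₂)
    (hN : 0 < N) (hM₁ : 0 < M₁) (hM₂ : 0 < M₂) (hh : 0 < h)
    (hκ0 : 0 < κ) (hκ1 : κ < 1)
    (h1 : (M₁ + M₂) * h ^ (-γ) + lam * D₃ / N ^ 2 + lam * D₁ / (N ^ 2 * M₁)
        + lam * D₂ / (N ^ 2 * M₂) = 0)
    (h2 : N * h ^ (-γ) + lam * D₁ / (N * M₁ ^ 2) + μ * C₁ / M₁ ^ 2 = 0)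
    (h3 : N * h ^ (-γ) + lam * D₂ / (N * M₂ ^ 2) + μ * C₂ / M₂ ^ 2 = 0)
    (h4 : -γ * N * h ^ (-γ - 1) * (M₁ + M₂) - μ * C₃ * η * h ^ (η - 1) = 0)
    (h5 : 2 * lam * κ * (TOL / Cα) ^ 2 - μ * TOL = 0)
    (h6 : (κ * TOL / Cα) ^ 2 - D₃ / N - D₁ / (N * M₁) - D₂ / (N * M₂) = 0)
    (h7 : (1 - κ) * TOL - C₃ * h ^ η - C₁ / M₁ - C₂ / M₂ = 0) :
    h ^ η = γ * κ * TOL / (2 * η * C₃) ∧ h = (γ * κ * TOL / (2 * η * C₃)) ^ (1 / η) := by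
  have hNne : N ≠ 0 := hN.ne'
  have hM₁ne : M₁ ≠ 0 := hM₁.ne'
  have hM₂ne : M₂ ≠ 0 := hM₂.ne'
  have hCαne : Cα ≠ 0 := hCα.ne'
  have hA : 0 < h ^ (-γ) := Real.rpow_pos_of_pos hh _
  have e1 : h ^ (-γ - 1) * h = h ^ (-γ) := by
    rw [← Real.rpow_add_one hh.ne' (-γ - 1)]; ring_nf
  have e2 : h ^ (η - 1) * h = h ^ η := by
    rw [← Real.rpow_add_one hh.ne' (η - 1)]; ring_nf
  have key4 : γ * N * (M₁ + M₂) * h ^ (-γ) + μ * C₃ * η * h ^ η = 0 := by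
    linear_combination (-h) * h4 - γ * N * (M₁ + M₂) * e1 - μ * C₃ * η * e2
  have eqC : N ^ 5 * M₁ * M₂ * (N * (M₁ + M₂) * h ^ (-γ) * Cα ^ 2 + lam * (κ * TOL) ^ 2) = 0 := by
    field_simp at h1 h6
    linear_combination N ^ 4 * (Cα ^ 2 * h1 + lam * h6)
  have hP : N ^ 5 * M₁ * M₂ ≠ 0 := by positivity
  have eqA : N * (M₁ + M₂) * h ^ (-γ) * Cα ^ 2 + lam * (κ * TOL) ^ 2 = 0 :=
    (mul_eq_zero.mp eqC).resolve_left hP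
  have eqB2 : (2 * (N * (M₁ + M₂) * h ^ (-γ))) * Cα ^ 2 = (-(μ * κ * TOL)) * Cα ^ 2 := by
    field_simp at h5
    linear_combination 2 * eqA - κ * h5
  have eqB : 2 * (N * (M₁ + M₂) * h ^ (-γ)) = -(μ * κ * TOL) :=
    mul_right_cancel₀ (pow_ne_zero 2 hCαne) eqB2
  have hpos : 0 < 2 * (N * (M₁ + M₂) * h ^ (-γ)) := by positivity
  have h9 : μ * κ * TOL < 0 := by linarith [hpos]
  have hμneg : μ < 0 := by
    by_contra hcon
    push_neg at hcon
    exact absurd h9 (not_lt.mpr (mul_nonneg (mul_nonneg hcon hκ0.le) hTOL.le))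
  have hmain : μ * (2 * C₃ * η * h ^ η - γ * κ * TOL) = 0 := by
    linear_combination 2 * key4 - γ * eqB
  have hz : 2 * C₃ * η * h ^ η - γ * κ * TOL = 0 :=
    (mul_eq_zero.mp hmain).resolve_left hμneg.ne
  have hBη : h ^ η = γ * κ * TOL / (2 * η * C₃) := by
    rw [eq_div_iff (by positivity)]
    linear_combination hz
  refine ⟨hBη, ?_⟩
  rw [← hBη, ← Real.rpow_mul hh.le, mul_one_div, div_self hη.ne', Real.rpow_one]
end

section
/- Let C₁, C₂, C₃, D₃, TOL, C_α, γ, η > 0, set D₁ = 2C₁ and D₂ = 2C₂, and let N, M₁, M₂, h > 0, 0 < κ < 1, λ, μ ∈ ℝ satisfy the seven stationarity equations: (i) (M₁ + M₂)h^(−γ) + λD₃/N² + λD₁/(N²M₁) + λD₂/(N²M₂) = 0; (ii) N·h^(−γ) + λD₁/(N·M₁²) + μC₁/M₁² = 0; (iii) N·h^(−γ) + λD₂/(N·M₂²) + μC₂/M₂² = 0; (iv) −γN·h^(−γ−1)(M₁ + M₂) − μC₃η·h^(η−1) = 0; (v) 2λκ(TOL/C_α)² − μ·TOL = 0; (vi)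 (κ·TOL/C_α)² − D₃/N − D₁/(N·M₁) − D₂/(N·M₂) = 0; (vii) (1 − κ)TOL − C₃h^η − C₁/M₁ − C₂/M₂ = 0. Then 1 − κ(1 + γ/(2η)) > 0 and M₁ = C₁·(1 + √(C₂/C₁)) / ((1 − κ(1 + γ/(2η)))·TOL) and M₂ = C₂·(1 + √(C₁/C₂)) / ((1 − κ(1 + γ/(2η)))·TOL). -/
set_option maxHeartbeats 1000000 in
/-- The seven stationarity conditions of the Lagrangian with discretization bias determine the optimal inner sample sizes `M₁` and `M₂`. -/

theorem optimal_M1_M2_from_stationarity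
    (C₁ C₂ C₃ D₁ D₂ D₃ TOL Cα γ η N M₁ M₂ h κ lam μ : ℝ)
    (hC₁ : 0 < C₁) (hC₂ : 0 < C₂) (hC₃ : 0 < C₃) (hD₃ : 0 < D₃)
    (hTOL : 0 < TOL) (hCα : 0 < Cα) (hγ : 0 < γ) (hη : 0 < η)
    (hD₁ : D₁ = 2 * C₁) (hD₂ : D₂ = 2 * C₂)
    (hN : 0 < N) (hM₁ : 0 < M₁) (hM₂ : 0 < M₂) (hh : 0 < h)
    (hκ0 : 0 < κ) (hκ1 : κ < 1)
    (h1 : (M₁ + M₂) * h ^ (-γ) + lam * D₃ / N ^ 2 + lam * D₁ / (N ^ 2 * M₁)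
        + lam * D₂ / (N ^ 2 * M₂) = 0)
    (h2 : N * h ^ (-γ) + lam * D₁ / (N * M₁ ^ 2) + μ * C₁ / M₁ ^ 2 = 0)
    (h3 : N * h ^ (-γ) + lam * D₂ / (N * M₂ ^ 2) + μ * C₂ / M₂ ^ 2 = 0)
    (h4 : -γ * N * h ^ (-γ - 1) * (M₁ + M₂) - μ * C₃ * η * h ^ (η - 1) = 0)
    (h5 : 2 * lam * κ * (TOL / Cα) ^ 2 - μ * TOL = 0)
    (h6 : (κ * TOL / Cα) ^ 2 - D₃ / N - D₁ / (N * M₁) - D₂ / (N * M₂) = 0)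
    (h7 : (1 - κ) * TOL - C₃ * h ^ η - C₁ / M₁ - C₂ / M₂ = 0) :
    0 < 1 - κ * (1 + γ / (2 * η)) ∧
      M₁ = C₁ * (1 + Real.sqrt (C₂ / C₁)) / ((1 - κ * (1 + γ / (2 * η))) * TOL) ∧
      M₂ = C₂ * (1 + Real.sqrt (C₁ / C₂)) / ((1 - κ * (1 + γ / (2 * η))) * TOL) := by
  have hN' := hN.ne'
  have hM₁' := hM₁.ne'
  have hM₂' := hM₂.ne'
  have hCα' := hCα.ne'
  have hTOL' := hTOL.ne'
  set A := h ^ (-γ) with hAdef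
  set B := h ^ η with hBdef
  have hA : 0 < A := Real.rpow_pos_of_pos hh _
  have hB : 0 < B := Real.rpow_pos_of_pos hh _
  have hS : 0 < M₁ + M₂ := by linarith
  field_simp at h1 h2 h3 h5 h6 h7
  have e2 : N ^ 2 * A * M₁ ^ 2 + lam * D₁ + μ * C₁ * N = 0 := by
    rcases mul_eq_zero.mp (show M₁ ^ 2 * (N ^ 2 * A * M₁ ^ 2 + lam * D₁ + μ * C₁ * N) = 0 by
      linear_combination M₁ ^ 2 * h2) with h | h
    · exact absurd h (pow_ne_zero 2 hM₁')
    · exact h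
  have e3 : N ^ 2 * A * M₂ ^ 2 + lam * D₂ + μ * C₂ * N = 0 := by
    rcases mul_eq_zero.mp (show M₂ ^ 2 * (N ^ 2 * A * M₂ ^ 2 + lam * D₂ + μ * C₂ * N) = 0 by
      linear_combination M₂ ^ 2 * h3) with h | h
    · exact absurd h (pow_ne_zero 2 hM₂')
    · exact h
  have e1 : (M₁ + M₂) * A * N ^ 2 * M₁ * M₂
      + lam * (D₃ * M₁ * M₂ + D₁ * M₂ + D₂ * M₁) = 0 := by
    rcases mul_eq_zero.mp (show N ^ 4 * ((M₁ + M₂) * A * N ^ 2 * M₁ * M₂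
        + lam * (D₃ * M₁ * M₂ + D₁ * M₂ + D₂ * M₁)) = 0 by linear_combination N ^ 4 * h1) with h | h
    · exact absurd h (pow_ne_zero 4 hN')
    · exact h
  have e6 : (κ * TOL) ^ 2 * N * M₁ * M₂
      - Cα ^ 2 * (D₃ * M₁ * M₂ + D₁ * M₂ + D₂ * M₁) = 0 := by
    rcases mul_eq_zero.mp (show N ^ 2 * ((κ * TOL) ^ 2 * N * M₁ * M₂
        - Cα ^ 2 * (D₃ * M₁ * M₂ + D₁ * M₂ + D₂ * M₁)) = 0 by linear_combination N ^ 2 * h6) with h | h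
    · exact absurd h (pow_ne_zero 2 hN')
    · exact h
  have e5 : 2 * lam * κ * TOL - Cα ^ 2 * μ = 0 := by
    rcases mul_eq_zero.mp (show TOL * (2 * lam * κ * TOL - Cα ^ 2 * μ) = 0 by
      linear_combination h5) with h | h
    · exact absurd h hTOL'
    · exact h
  have elam : (M₁ + M₂) * A * N * Cα ^ 2 + lam * (κ * TOL) ^ 2 = 0 := by
    rcases mul_eq_zero.mp (show (N * M₁ * M₂) * ((M₁ + M₂) * A * N * Cα ^ 2
        + lam * (κ * TOL) ^ 2) = 0 by linear_combination Cα ^ 2 * e1 + lam * e6) with h | h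
    · exact absurd h (by positivity)
    · exact h
  have eμ : μ * κ * TOL + 2 * (M₁ + M₂) * A * N = 0 := by
    rcases mul_eq_zero.mp (show Cα ^ 2 * (μ * κ * TOL + 2 * (M₁ + M₂) * A * N) = 0 by
      linear_combination (-(κ * TOL)) * e5 + 2 * elam) with h | h
    · exact absurd h (by positivity)
    · exact h
  have hg1 : h ^ (-γ - 1) * h = A := by
    rw [hAdef, ← Real.rpow_add_one hh.ne' (-γ - 1)]; norm_num
  have hg2 : h ^ (η - 1) * h = B := by
    rw [hBdef, ← Real.rpow_add_one hh.ne' (η - 1)]; norm_num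
  have e4 : γ * N * A * (M₁ + M₂) + μ * C₃ * η * B = 0 := by
    have key : (-γ * N * h ^ (-γ - 1) * (M₁ + M₂) - μ * C₃ * η * h ^ (η - 1)) * h = 0 := by
      rw [h4]; ring
    linear_combination (-1 : ℝ) * key - γ * N * (M₁ + M₂) * hg1 - μ * C₃ * η * hg2
  have eC₃B : 2 * η * C₃ * B - γ * κ * TOL = 0 := by
    rcases mul_eq_zero.mp (show ((M₁ + M₂) * A * N) * (2 * η * C₃ * B - γ * κ * TOL) = 0 by
      linear_combination (-(κ * TOL)) * e4 + C₃ * η * B * eμ) with h | h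
    · exact absurd h (by positivity)
    · exact h
  have psum : 2 * η * (C₁ * M₂ + C₂ * M₁)
      = (2 * η * (1 - κ) * TOL - γ * κ * TOL) * (M₁ * M₂) := by
    linear_combination (-(2 * η)) * h7 - M₁ * M₂ * eC₃B
  have hT2 : 0 < 2 * η * (1 - κ) * TOL - γ * κ * TOL := by
    have hpos : 0 < (2 * η * (1 - κ) * TOL - γ * κ * TOL) * (M₁ * M₂) := by
      rw [← psum]; positivity
    rcases mul_pos_iff.mp hpos with ⟨hT, _⟩ | ⟨_, hbad⟩
    · exact hT
    · exact absurd hbad (not_lt.mpr (mul_pos hM₁ hM₂).le)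
  have hGe : (1 - κ * (1 + γ / (2 * η))) * (2 * η * TOL)
      = 2 * η * (1 - κ) * TOL - γ * κ * TOL := by
    field_simp; ring
  have hG : 0 < 1 - κ * (1 + γ / (2 * η)) := by
    have hpos : 0 < (1 - κ * (1 + γ / (2 * η))) * (2 * η * TOL) := by rw [hGe]; exact hT2
    rcases mul_pos_iff.mp hpos with ⟨hT, _⟩ | ⟨_, hbad⟩
    · exact hT
    · exact absurd hbad (not_lt.mpr (by positivity))
  have prat2 : (N ^ 2 * A) * (C₂ * M₁ ^ 2 - C₁ * M₂ ^ 2) = 0 := by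
    linear_combination C₂ * e2 - C₁ * e3 - lam * C₂ * hD₁ + lam * C₁ * hD₂
  have prat2' : C₂ * M₁ ^ 2 - C₁ * M₂ ^ 2 = 0 := by
    rcases mul_eq_zero.mp prat2 with h | h
    · exact absurd h (by positivity)
    · exact h
  set s₁ := Real.sqrt C₁ with hs₁def
  set s₂ := Real.sqrt C₂ with hs₂def
  have hs₁ : s₁ ^ 2 = C₁ := Real.sq_sqrt hC₁.le
  have hs₂ : s₂ ^ 2 = C₂ := Real.sq_sqrt hC₂.le
  have hs₁0 : 0 < s₁ := Real.sqrt_pos.mpr hC₁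
  have hs₂0 : 0 < s₂ := Real.sqrt_pos.mpr hC₂
  have prat : M₁ * s₂ = M₂ * s₁ := by
    rcases mul_eq_zero.mp (show (M₁ * s₂ - M₂ * s₁) * (M₁ * s₂ + M₂ * s₁) = 0 by
      linear_combination prat2' + M₁ ^ 2 * hs₂ - M₂ ^ 2 * hs₁) with h | h
    · linarith [sub_eq_zero.mp h]
    · exact absurd h (by positivity : 0 < M₁ * s₂ + M₂ * s₁).ne'
  have key1 : M₁ * (2 * η * (1 - κ) * TOL - γ * κ * TOL) = 2 * η * (s₁ ^ 2 + s₁ * s₂) := by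
    rcases mul_eq_zero.mp (show M₂ * (M₁ * (2 * η * (1 - κ) * TOL - γ * κ * TOL)
        - 2 * η * (s₁ ^ 2 + s₁ * s₂)) = 0 by
      linear_combination -psum + 2 * η * s₂ * prat - 2 * η * M₂ * hs₁ - 2 * η * M₁ * hs₂)
        with h | h
    · exact absurd h hM₂'
    · linarith [sub_eq_zero.mp h]
  have key2 : M₂ * (2 * η * (1 - κ) * TOL - γ * κ * TOL) = 2 * η * (s₂ ^ 2 + s₁ * s₂) := by
    rcases mul_eq_zero.mp (show M₁ * (M₂ * (2 * η * (1 - κ) * TOL - γ * κ * TOL)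
        - 2 * η * (s₂ ^ 2 + s₁ * s₂)) = 0 by
      linear_combination -psum - 2 * η * s₁ * prat - 2 * η * M₂ * hs₁ - 2 * η * M₁ * hs₂)
        with h | h
    · exact absurd h hM₁'
    · linarith [sub_eq_zero.mp h]
  have h2η : (2 * η) ≠ 0 := by positivity
  refine ⟨hG, ?_, ?_⟩
  · rw [Real.sqrt_div hC₂.le C₁, ← hs₁def, ← hs₂def, eq_div_iff (by positivity)]
    refine mul_right_cancel₀ h2η ?_
    have expand : M₁ * ((1 - κ * (1 + γ / (2 * η))) * TOL) * (2 * η)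
        = M₁ * (2 * η * (1 - κ) * TOL - γ * κ * TOL) := by
      linear_combination M₁ * hGe
    rw [expand, key1, ← hs₁]
    field_simp
  · rw [Real.sqrt_div hC₁.le C₂, ← hs₁def, ← hs₂def, eq_div_iff (by positivity)]
    refine mul_right_cancel₀ h2η ?_
    have expand : M₂ * ((1 - κ * (1 + γ / (2 * η))) * TOL) * (2 * η)
        = M₂ * (2 * η * (1 - κ) * TOL - γ * κ * TOL) := by
      linear_combination M₂ * hGe
    rw [expand, key2, ← hs₂]
    field_simp
end

section
/- Let C₁, C₂, C₃, D₃, TOL, C_α, γ, η > 0, set D₁ = 2C₁ and D₂ = 2C₂, and let N, M₁, M₂, h > 0, 0 < κ < 1, λ, μ ∈ ℝ satisfy the seven stationarity equations: (i) (M₁ + M₂)h^(−γ) + λD₃/N² + λD₁/(N²M₁) + λD₂/(N²M₂) = 0; (ii) N·h^(−γ) + λD₁/(N·M₁²) + μC₁/M₁² = 0; (iii) N·h^(−γ) + λD₂/(N·M₂²) + μC₂/M₂² = 0; (iv) −γN·h^(−γ−1)(M₁ + M₂) − μC₃η·h^(η−1) = 0; (v) 2λκ(TOL/C_α)² − μ·TOL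 = 0; (vi) (κ·TOL/C_α)² − D₃/N − D₁/(N·M₁) − D₂/(N·M₂) = 0; (vii) (1 − κ)TOL − C₃h^η − C₁/M₁ − C₂/M₂ = 0. Then κ satisfies the quadratic equation ((1 + γ/(2η))²·TOL/D₃)·κ² − (1/4 + (1/2 + 2·TOL/D₃)·(1 + γ/(2η)))·κ + (1/2 + TOL/D₃) = 0. -/
/-- The seven stationarity conditions of the Lagrangian with discretization bias imply the quadratic equation for the optimal error-splitting parameter `κ`. -/
theorem kappa_quadratic_with_bias
    (C₁ C₂ C₃ D₁ D₂ D₃ TOL Cα γ η N M₁ M₂ h κ lam μ : ℝ)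
    (hC₁ : 0 < C₁) (hC₂ : 0 < C₂) (hC₃ : 0 < C₃) (hD₃ : 0 < D₃)
    (hTOL : 0 < TOL) (hCα : 0 < Cα) (hγ : 0 < γ) (hη : 0 < η)
    (hD₁ : D₁ = 2 * C₁) (hD₂ : D₂ = 2 * C₂)
    (hN : 0 < N) (hM₁ : 0 < M₁) (hM₂ : 0 < M₂) (hh : 0 < h)
    (hκ0 : 0 < κ) (hκ1 : κ < 1)
    (h1 : (M₁ + M₂) * h ^ (-γ) + lam * D₃ / N ^ 2 + lam * D₁ / (N ^ 2 * M₁)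
        + lam * D₂ / (N ^ 2 * M₂) = 0)
    (h2 : N * h ^ (-γ) + lam * D₁ / (N * M₁ ^ 2) + μ * C₁ / M₁ ^ 2 = 0)
    (h3 : N * h ^ (-γ) + lam * D₂ / (N * M₂ ^ 2) + μ * C₂ / M₂ ^ 2 = 0)
    (h4 : -γ * N * h ^ (-γ - 1) * (M₁ + M₂) - μ * C₃ * η * h ^ (η - 1) = 0)
    (h5 : 2 * lam * κ * (TOL / Cα) ^ 2 - μ * TOL = 0)
    (h6 : (κ * TOL / Cα) ^ 2 - D₃ / N - D₁ / (N * M₁) - D₂ / (N * M₂) = 0)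
    (h7 : (1 - κ) * TOL - C₃ * h ^ η - C₁ / M₁ - C₂ / M₂ = 0) :
    (1 + γ / (2 * η)) ^ 2 * TOL / D₃ * κ ^ 2
      - (1 / 4 + (1 / 2 + 2 * TOL / D₃) * (1 + γ / (2 * η))) * κ
      + (1 / 2 + TOL / D₃) = 0 := by
  subst hD₁ hD₂
  have cancel : ∀ a c : ℝ, 0 < c → a * c = 0 → a = 0 := by
    intro a c hc hac
    rcases mul_eq_zero.mp hac with h' | h'
    · exact h'
    · exact absurd h' hc.ne'
  have hρ : (0:ℝ) < h ^ (-γ) := Real.rpow_pos_of_pos hh _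
  set ρ := h ^ (-γ) with hρdef
  have hhe : (0:ℝ) < h ^ η := Real.rpow_pos_of_pos hh _
  have hNe := hN.ne'
  have hM₁e := hM₁.ne'
  have hM₂e := hM₂.ne'
  have hCαe := hCα.ne'
  have hhne := hh.ne'
  have hA : (0:ℝ) < M₁ + M₂ := by linarith
  -- fraction-free forms
  have f1 : (M₁ + M₂) * ρ * N ^ 2 * (M₁ * M₂) + lam * D₃ * (M₁ * M₂)
      + lam * (2 * C₁) * M₂ + lam * (2 * C₂) * M₁ = 0 := by
    refine cancel _ (N ^ 4) (by positivity) ?_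
    field_simp at h1
    linear_combination N ^ 4 * h1
  have f2 : N ^ 2 * ρ * M₁ ^ 2 + lam * (2 * C₁) + μ * N * C₁ = 0 := by
    refine cancel _ (M₁ ^ 2) (by positivity) ?_
    field_simp at h2
    linear_combination M₁ ^ 2 * h2
  have f3 : N ^ 2 * ρ * M₂ ^ 2 + lam * (2 * C₂) + μ * N * C₂ = 0 := by
    refine cancel _ (M₂ ^ 2) (by positivity) ?_
    field_simp at h3
    linear_combination M₂ ^ 2 * h3
  have f5 : 2 * lam * κ * TOL ^ 2 - Cα ^ 2 * (μ * TOL) = 0 := by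
    field_simp at h5
    linear_combination h5
  have f6 : (κ * TOL) ^ 2 * N * (M₁ * M₂)
      = Cα ^ 2 * (D₃ * (M₁ * M₂) + 2 * C₁ * M₂ + 2 * C₂ * M₁) := by
    have key : ((κ * TOL) ^ 2 * N * (M₁ * M₂)
        - Cα ^ 2 * (D₃ * (M₁ * M₂) + 2 * C₁ * M₂ + 2 * C₂ * M₁)) * N ^ 2 = 0 := by
      field_simp at h6
      linear_combination N ^ 2 * h6
    have := cancel _ (N ^ 2) (by positivity) key
    linarith
  have f7 : (1 - κ) * TOL * (M₁ * M₂) - C₃ * h ^ η * (M₁ * M₂)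
      - (C₁ * M₂ + C₂ * M₁) = 0 := by
    field_simp at h7
    linear_combination h7
  -- lam * (κ TOL)^2 = -(M₁+M₂) ρ N Cα²
  have hl : lam * (κ * TOL) ^ 2 + (M₁ + M₂) * ρ * N * Cα ^ 2 = 0 := by
    refine cancel _ (N * (M₁ * M₂)) (by positivity) ?_
    linear_combination Cα ^ 2 * f1 + lam * f6
  -- μ κ TOL = -2 (M₁+M₂) ρ N
  have hm : μ * (κ * TOL) + 2 * ((M₁ + M₂) * ρ * N) = 0 := by
    refine cancel _ (Cα ^ 2 * TOL) (by positivity) ?_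
    linear_combination 2 * TOL * hl - κ * TOL * f5
  -- step (d): 2 η C₃ h^η = γ κ TOL
  have e4 : γ * N * ρ * (M₁ + M₂) + μ * C₃ * η * h ^ η = 0 := by
    have r1 : h ^ (-γ - 1) = ρ / h := by
      rw [hρdef, Real.rpow_sub hh, Real.rpow_one]
    have r2 : h ^ (η - 1) = h ^ η / h := by
      rw [Real.rpow_sub hh, Real.rpow_one]
    rw [r1, r2] at h4
    refine cancel _ h hh ?_
    field_simp at h4
    linear_combination -h * h4
  have hCh : 2 * η * (C₃ * h ^ η) = γ * κ * TOL := by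
    have key : (2 * η * (C₃ * h ^ η) - γ * κ * TOL) * ((M₁ + M₂) * ρ * N) = 0 := by
      linear_combination (C₃ * η * h ^ η) * hm - (κ * TOL) * e4
    have := cancel _ _ (by positivity) key
    linarith
  -- X := C₁ M₂ + C₂ M₁
  have fX : (C₁ * M₂ + C₂ * M₁) * (2 * lam + μ * N)
      + N ^ 2 * ρ * (M₁ * M₂) * (M₁ + M₂) = 0 := by
    linear_combination M₂ * f2 + M₁ * f3
  -- g1 : X (2 TOL Cα² + 2 N κ TOL²) = N M₁ M₂ κ² TOL³
  have g1 : (C₁ * M₂ + C₂ * M₁) * (2 * TOL * Cα ^ 2 + 2 * N * κ * TOL ^ 2)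
      - N * (M₁ * M₂) * κ ^ 2 * TOL ^ 3 = 0 := by
    refine cancel _ ((M₁ + M₂) * ρ * N * κ) (by positivity) ?_
    linear_combination 2 * TOL * (C₁ * M₂ + C₂ * M₁) * κ * hl
      + N * (C₁ * M₂ + C₂ * M₁) * κ ^ 2 * TOL ^ 2 * hm
      - κ ^ 3 * TOL ^ 3 * fX
  -- g2 : 2X(D₃ M₁M₂ + 2X) = κ TOL D₃ (M₁M₂)²
  have g2 : 2 * (C₁ * M₂ + C₂ * M₁) * (D₃ * (M₁ * M₂) + 2 * (C₁ * M₂ + C₂ * M₁))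
      - κ * TOL * D₃ * (M₁ * M₂) ^ 2 = 0 := by
    refine cancel _ (Cα ^ 2) (by positivity) ?_
    linear_combination κ * (M₁ * M₂) * g1
      + (κ * TOL * (M₁ * M₂) - 2 * (C₁ * M₂ + C₂ * M₁)) * f6
  -- 2 η X = TOL (2η - κ(2η+γ)) M₁ M₂
  have hX : 2 * η * (C₁ * M₂ + C₂ * M₁)
      = TOL * (2 * η - κ * (2 * η + γ)) * (M₁ * M₂) := by
    linear_combination (-(2 * η)) * f7 - (M₁ * M₂) * hCh
  -- final polynomial identity
  have q : 2 * (2 * η - κ * (2 * η + γ))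
        * (2 * η * D₃ + 2 * TOL * (2 * η - κ * (2 * η + γ)))
      - 4 * η ^ 2 * κ * D₃ = 0 := by
    refine cancel _ TOL hTOL ?_
    refine cancel _ ((M₁ * M₂) ^ 2) (by positivity) ?_
    linear_combination 4 * η ^ 2 * g2
      + (-(8 * η * (C₁ * M₂ + C₂ * M₁)) - 4 * η * D₃ * (M₁ * M₂)
          - 4 * TOL * (2 * η - κ * (2 * η + γ)) * (M₁ * M₂)) * hX
  have hD₃e := hD₃.ne'
  have hηe := hη.ne'
  field_simp
  linear_combination q
end

section
/- Let C₁, C₂, D₃, TOL, C_α > 0, set D₁ = 2C₁ and D₂ = 2C₂, and let N, M₁, M₂ > 0, 0 < κ < 1, λ, μ ∈ ℝ satisfy the six stationarity equations: (i) M₁ + M₂ + (μ/N²)(D₃ + D₁/M₁ + D₂/M₂) = 0; (ii) N + λC₁/M₁² + μD₁/(N·M₁²) = 0; (iii) N + λC₂/M₂² + μD₂/(N·M₂²) = 0; (iv) 2μκ·TOL²/C_α² − λ·TOL = 0; (v) (1 − κ)TOL − C₁/M₁ − C₂/M₂ = 0; (vi) (κ·TOL/C_α)² − (D₃ + D₁/M₁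 + D₂/M₂)/N = 0. Then M₁ = √C₁·(√C₁ + √C₂)/((1 − κ)·TOL), M₂ = √C₂·(√C₁ + √C₂)/((1 − κ)·TOL), and N = 2·(C_α/(κ·TOL))²·(D₃/2 + (1 − κ)·TOL). -/
/-- The six stationarity conditions of the Lagrangian determine the optimal
sample sizes `M₁`, `M₂`, and `N` of the double-loop Monte Carlo estimator with
two inner loops. -/
theorem optimal_setting_from_stationarity
    (C₁ C₂ D₁ D₂ D₃ TOL Cα N M₁ M₂ κ lam μ : ℝ)
    (hC₁ : 0 < C₁) (hC₂ : 0 < C₂) (hD₃ : 0 < D₃) (hTOL : 0 < TOL) (hCα : 0 < Cα)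
    (hD₁ : D₁ = 2 * C₁) (hD₂ : D₂ = 2 * C₂)
    (hN : 0 < N) (hM₁ : 0 < M₁) (hM₂ : 0 < M₂) (hκ0 : 0 < κ) (hκ1 : κ < 1)
    (h1 : M₁ + M₂ + (μ / N ^ 2) * (D₃ + D₁ / M₁ + D₂ / M₂) = 0)
    (h2 : N + lam * C₁ / M₁ ^ 2 + μ * D₁ / (N * M₁ ^ 2) = 0)
    (h3 : N + lam * C₂ / M₂ ^ 2 + μ * D₂ / (N * M₂ ^ 2) = 0)
    (h4 : 2 * μ * κ * TOL ^ 2 / Cα ^ 2 - lam * TOL = 0)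
    (h5 : (1 - κ) * TOL - C₁ / M₁ - C₂ / M₂ = 0)
    (h6 : (κ * TOL / Cα) ^ 2 - (D₃ + D₁ / M₁ + D₂ / M₂) / N = 0) :
    M₁ = Real.sqrt C₁ * (Real.sqrt C₁ + Real.sqrt C₂) / ((1 - κ) * TOL) ∧
      M₂ = Real.sqrt C₂ * (Real.sqrt C₁ + Real.sqrt C₂) / ((1 - κ) * TOL) ∧
      N = 2 * (Cα / (κ * TOL)) ^ 2 * (D₃ / 2 + (1 - κ) * TOL) := by
  subst hD₁ hD₂
  have hN' : N ≠ 0 := hN.ne'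
  have hM₁' : M₁ ≠ 0 := hM₁.ne'
  have hM₂' : M₂ ≠ 0 := hM₂.ne'
  have hCα' : Cα ≠ 0 := hCα.ne'
  have hκT : (0:ℝ) < (1 - κ) * TOL := by nlinarith
  have hκT' : (1 - κ) * TOL ≠ 0 := hκT.ne'
  set a := Real.sqrt C₁ with ha_def
  set b := Real.sqrt C₂ with hb_def
  have ha2 : a ^ 2 = C₁ := Real.sq_sqrt hC₁.le
  have hb2 : b ^ 2 = C₂ := Real.sq_sqrt hC₂.le
  have ha : 0 < a := Real.sqrt_pos.mpr hC₁
  have hb : 0 < b := Real.sqrt_pos.mpr hC₂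
  -- polynomialize h2, h3, h5, h6
  have e2 : N ^ 2 * M₁ ^ 2 + lam * C₁ * N + 2 * μ * C₁ = 0 := by
    field_simp at h2
    have h : M₁ ^ 2 * (N ^ 2 * M₁ ^ 2 + lam * C₁ * N + 2 * μ * C₁) = 0 := by
      linear_combination M₁ ^ 2 * h2
    rcases mul_eq_zero.mp h with h' | h'
    · exact absurd h' (by positivity)
    · exact h'
  have e3 : N ^ 2 * M₂ ^ 2 + lam * C₂ * N + 2 * μ * C₂ = 0 := by
    field_simp at h3
    have h : M₂ ^ 2 * (N ^ 2 * M₂ ^ 2 + lam * C₂ * N + 2 * μ * C₂) = 0 := by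
      linear_combination M₂ ^ 2 * h3
    rcases mul_eq_zero.mp h with h' | h'
    · exact absurd h' (by positivity)
    · exact h'
  have e5 : (1 - κ) * TOL * (M₁ * M₂) - C₁ * M₂ - C₂ * M₁ = 0 := by
    field_simp at h5; linear_combination h5
  have e6 : (κ * TOL) ^ 2 * N * (M₁ * M₂)
      - Cα ^ 2 * (D₃ * (M₁ * M₂) + 2 * C₁ * M₂ + 2 * C₂ * M₁) = 0 := by
    field_simp at h6; linear_combination h6
  -- from e2, e3: M₁² C₂ = M₂² C₁
  have key : M₁ ^ 2 * C₂ = M₂ ^ 2 * C₁ := by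
    have hNN : (0:ℝ) < N ^ 2 := by positivity
    have h : N ^ 2 * (M₁ ^ 2 * C₂ - M₂ ^ 2 * C₁) = 0 := by
      linear_combination C₂ * e2 - C₁ * e3
    have := mul_eq_zero.mp h
    rcases this with h' | h'
    · exact absurd h' hNN.ne'
    · linarith
  -- hence M₁ b = M₂ a
  have hM : M₁ * b = M₂ * a := by
    have hfac : (M₁ * b - M₂ * a) * (M₁ * b + M₂ * a) = 0 := by
      linear_combination key - M₂ ^ 2 * ha2 + M₁ ^ 2 * hb2
    rcases mul_eq_zero.mp hfac with h' | h'
    · linarith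
    · exfalso
      have := mul_pos hM₁ hb
      have := mul_pos hM₂ ha
      linarith
  -- M₁
  have hM₁val : M₁ * ((1 - κ) * TOL) = a * (a + b) := by
    have h : M₂ * (M₁ * ((1 - κ) * TOL) - a * (a + b)) = 0 := by
      linear_combination e5 - M₂ * ha2 - M₁ * hb2 + b * hM
    rcases mul_eq_zero.mp h with h' | h'
    · exact absurd h' hM₂'
    · linarith
  have hM₂val : M₂ * ((1 - κ) * TOL) = b * (a + b) := by
    have h : M₁ * (M₂ * ((1 - κ) * TOL) - b * (a + b)) = 0 := by
      linear_combination e5 - M₂ * ha2 - M₁ * hb2 - a * hM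
    rcases mul_eq_zero.mp h with h' | h'
    · exact absurd h' hM₁'
    · linarith
  refine ⟨?_, ?_, ?_⟩
  · field_simp [show (1:ℝ) - κ ≠ 0 by linarith]
    linear_combination hM₁val
  · field_simp [show (1:ℝ) - κ ≠ 0 by linarith]
    linear_combination hM₂val
  · have hk : κ * TOL ≠ 0 := by positivity
    have h : (M₁ * M₂) * ((κ * TOL) ^ 2 * N
        - Cα ^ 2 * (D₃ + 2 * ((1 - κ) * TOL))) = 0 := by
      linear_combination e6 - 2 * Cα ^ 2 * e5
    rcases mul_eq_zero.mp h with h' | h'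
    · exact absurd h' (by positivity)
    · field_simp
      linear_combination h'
end
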